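/- Let V be a real vector space of finite dimension m, let E ≤ V ⊗ ℂ be a complex subspace, and let ε be a ℂ-bilinear skew-symmetric form on E. The complex maximal isotropic L(E,ε) ≤ (V ⊕ V*) ⊗ ℂ has real index zero, i.e. L(E,ε) ∩ conj(L(E,ε)) = {0}, if and only if E + conj(E) = V ⊗ ℂ and the real skew 2-form ω_Δ on the real subspace Δ ≤ V (defined by Δ ⊗ ℂ = E ∩ conj(E)) given by ω_Δ(X, Y) = Im ε(X, Y) for X, Y ∈ Δ is nondegenerate. -/

import Mathlib

set_option synthInstance.maxHeartbeats 1000000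
set_option maxHeartbeats 1000000

open Module
open scoped TensorProduct

/-- Complex conjugation on the complexification `V ⊗ ℂ`. -/
noncomputable def conjV (V : Type*) [AddCommGroup V] [Module ℝ V] :
    (ℂ ⊗[ℝ] V) →ₗ[ℝ] (ℂ ⊗[ℝ] V) :=
  TensorProduct.map Complex.conjAe.toLinearMap LinearMap.id

/-- Complex conjugation on the complexified dual `V* ⊗ ℂ`, modelled as the
space of complex-valued real-linear forms `V →ₗ[ℝ] ℂ`. -/
noncomputable def conjF {V : Type*} [AddCommGroup V] [Module ℝ V]
    (ξ : V →ₗ[ℝ] ℂ) : V →ₗ[ℝ] ℂ :=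
  Complex.conjAe.toLinearMap ∘ₗ ξ

/-- The complex maximal isotropic `L(E,ε) ≤ (V ⊕ V*) ⊗ ℂ` determined by a
complex subspace `E ≤ V ⊗ ℂ` and a complex bilinear form `ε` on `E`. -/
noncomputable def LEepsC {V : Type*} [AddCommGroup V] [Module ℝ V]
    (E : Submodule ℂ (ℂ ⊗[ℝ] V)) (ε : E →ₗ[ℂ] E →ₗ[ℂ] ℂ) :
    Submodule ℂ ((ℂ ⊗[ℝ] V) × (V →ₗ[ℝ] ℂ)) where
  carrier := {p | ∃ h : p.1 ∈ E, ∀ y : E,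
    LinearMap.liftBaseChange ℂ p.2 y.1 = ε ⟨p.1, h⟩ y}
  add_mem' := by
    rintro p q ⟨hp, hp2⟩ ⟨hq, hq2⟩
    refine ⟨add_mem hp hq, fun y => ?_⟩
    have h1 : (⟨(p + q).1, add_mem hp hq⟩ : E) = ⟨p.1, hp⟩ + ⟨q.1, hq⟩ := rfl
    have h2 : LinearMap.liftBaseChange ℂ (p + q).2 y.1 =
        LinearMap.liftBaseChange ℂ p.2 y.1 + LinearMap.liftBaseChange ℂ q.2 y.1 := by
      have : (p + q).2 = p.2 + q.2 := rfl
      rw [this]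
      simp only [LinearMap.liftBaseChange, map_add, LinearMap.add_apply]
    rw [h1, h2, map_add, LinearMap.add_apply, hp2 y, hq2 y]
  zero_mem' := by
    refine ⟨zero_mem E, fun y => ?_⟩
    have h1 : (⟨((0 : (ℂ ⊗[ℝ] V) × (V →ₗ[ℝ] ℂ))).1, zero_mem E⟩ : E) = 0 := rfl
    have h2 : LinearMap.liftBaseChange ℂ ((0 : (ℂ ⊗[ℝ] V) × (V →ₗ[ℝ] ℂ))).2 y.1 = 0 := by
      have h0 : ((0 : (ℂ ⊗[ℝ] V) × (V →ₗ[ℝ] ℂ))).2 = 0 := rfl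
      rw [h0]
      simp only [LinearMap.liftBaseChange, map_zero, LinearMap.zero_apply]
    rw [h1, h2, map_zero, LinearMap.zero_apply]
  smul_mem' := by
    rintro c p ⟨hp, hp2⟩
    refine ⟨Submodule.smul_mem E c hp, fun y => ?_⟩
    have h1 : (⟨(c • p).1, Submodule.smul_mem E c hp⟩ : E) = c • (⟨p.1, hp⟩ : E) := rfl
    have h2 : LinearMap.liftBaseChange ℂ (c • p).2 y.1 =
        c • LinearMap.liftBaseChange ℂ p.2 y.1 := by
      have : (c • p).2 = c • p.2 := rfl
      rw [this]
      simp only [LinearMap.liftBaseChange, map_smul, LinearMap.smul_apply]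
    rw [h1, h2, map_smul, LinearMap.smul_apply, hp2 y]

/-- The real subspace `Δ ≤ V` with `Δ ⊗ ℂ = E ∩ conj(E)`. -/
noncomputable def realDelta {V : Type*} [AddCommGroup V] [Module ℝ V]
    (E : Submodule ℂ (ℂ ⊗[ℝ] V)) : Submodule ℝ V :=
  (E.restrictScalars ℝ ⊓ (E.restrictScalars ℝ).comap (conjV V)).comap
    (TensorProduct.mk ℝ ℂ V 1)


section AuxHelpers
variable {V : Type*} [AddCommGroup V] [Module ℝ V]

lemma conjV_tmul (c : ℂ) (v : V) :
    conjV V (c ⊗ₜ[ℝ] v) = (starRingEnd ℂ) c ⊗ₜ[ℝ] v := by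
  simp [conjV]

lemma conjV_conjV (z : ℂ ⊗[ℝ] V) : conjV V (conjV V z) = z := by
  induction z using TensorProduct.induction_on with
  | zero => simp
  | tmul c v => simp [conjV_tmul]
  | add x y hx hy => simp [map_add, hx, hy]

lemma conjV_smul (c : ℂ) (z : ℂ ⊗[ℝ] V) :
    conjV V (c • z) = (starRingEnd ℂ) c • conjV V z := by
  induction z using TensorProduct.induction_on with
  | zero => simp
  | tmul d v =>
      rw [TensorProduct.smul_tmul', conjV_tmul, conjV_tmul, TensorProduct.smul_tmul']
      simp [smul_eq_mul]
  | add x y hx hy => simp [map_add, smul_add, hx, hy]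

lemma liftBaseChange_conjF (ξ : V →ₗ[ℝ] ℂ) (z : ℂ ⊗[ℝ] V) :
    LinearMap.liftBaseChange ℂ (conjF ξ) z
      = (starRingEnd ℂ) (LinearMap.liftBaseChange ℂ ξ (conjV V z)) := by
  induction z using TensorProduct.induction_on with
  | zero => simp
  | tmul c v =>
      rw [conjV_tmul]
      simp [conjF, smul_eq_mul]
  | add x y hx hy => simp [map_add, hx, hy]

lemma lift_restrict_eq (η : (ℂ ⊗[ℝ] V) →ₗ[ℂ] ℂ) :
    LinearMap.liftBaseChange ℂ ((η.restrictScalars ℝ) ∘ₗ (TensorProduct.mk ℝ ℂ V 1)) = η := by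
  have : (η.restrictScalars ℝ) ∘ₗ (TensorProduct.mk ℝ ℂ V 1)
      = (LinearMap.liftBaseChangeEquiv ℂ).symm η := by
    ext v; rfl
  rw [this]
  exact (LinearMap.liftBaseChangeEquiv ℂ).apply_symm_apply η

lemma one_tmul_eq_zero {v : V} (h : (1:ℂ) ⊗ₜ[ℝ] v = 0) : v = 0 := by
  have hr : (TensorProduct.lid ℝ V).toLinearMap.comp
      (TensorProduct.map Complex.reLm LinearMap.id) ((1:ℂ) ⊗ₜ[ℝ] v) = v := by
    simp
  rw [h] at hr
  simpa using hr.symm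

lemma exists_real [FiniteDimensional ℝ V] {z : ℂ ⊗[ℝ] V} (hz : conjV V z = z) :
    ∃ v : V, z = (1:ℂ) ⊗ₜ[ℝ] v := by
  classical
  set b := Module.finBasis ℝ V with hb
  set B := Algebra.TensorProduct.basis ℂ b with hB
  have hrepr : ∀ (w : ℂ ⊗[ℝ] V) (i), B.repr (conjV V w) i = (starRingEnd ℂ) (B.repr w i) := by
    intro w
    induction w using TensorProduct.induction_on with
    | zero => simp
    | tmul c v =>
        intro i
        rw [conjV_tmul]
        simp [hB, Algebra.TensorProduct.basis_repr_tmul, smul_eq_mul, Complex.conj_ofReal]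
    | add x y hx hy =>
        intro i
        simp [map_add, hx i, hy i]
  have hreal : ∀ i, B.repr z i = ((B.repr z i).re : ℂ) := by
    intro i
    have := hrepr z i
    rw [hz] at this
    have him : (B.repr z i).im = 0 := by
      have := congrArg Complex.im this
      simp at this
      linarith
    exact (Complex.ext_iff.mpr ⟨rfl, by simp [him]⟩)
  refine ⟨∑ i, (B.repr z i).re • b i, ?_⟩
  have key : (1:ℂ) ⊗ₜ[ℝ] (∑ i, (B.repr z i).re • b i) = ∑ i, B.repr z i • B i := by
    rw [TensorProduct.tmul_sum]
    refine Finset.sum_congr rfl fun i _ => ?_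
    rw [TensorProduct.tmul_smul, hreal i, Algebra.TensorProduct.basis_apply,
      Complex.ofReal_re]
    exact (algebraMap_smul ℂ ((B.repr z i).re) ((1:ℂ) ⊗ₜ[ℝ] b i)).symm
  exact ((key.trans (B.sum_repr z))).symm


/-- The conjugate subspace, as a complex submodule. -/
noncomputable def conjSub (E : Submodule ℂ (ℂ ⊗[ℝ] V)) : Submodule ℂ (ℂ ⊗[ℝ] V) where
  carrier := {z | conjV V z ∈ E}
  add_mem' := by
    intro a b ha hb
    simpa [map_add] using add_mem ha hb
  zero_mem' := by simp [Set.mem_setOf_eq]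
  smul_mem' := by
    intro c z hz
    show conjV V (c • z) ∈ E
    rw [conjV_smul]
    exact E.smul_mem _ hz

lemma mem_conjSub {E : Submodule ℂ (ℂ ⊗[ℝ] V)} {z : ℂ ⊗[ℝ] V} :
    z ∈ conjSub E ↔ conjV V z ∈ E := Iff.rfl

lemma mem_realDelta_iff {E : Submodule ℂ (ℂ ⊗[ℝ] V)} {v : V} :
    v ∈ realDelta E ↔ ((1:ℂ) ⊗ₜ[ℝ] v ∈ E ∧ conjV V ((1:ℂ) ⊗ₜ[ℝ] v) ∈ E) := by
  rw [realDelta, Submodule.mem_comap, Submodule.mem_inf, Submodule.mem_comap]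
  rfl

/-- Decomposition of an element of `E ∩ conj(E)` into real and imaginary parts in `Δ`. -/
lemma mem_inter_decomp [FiniteDimensional ℝ V] {E : Submodule ℂ (ℂ ⊗[ℝ] V)}
    {z : ℂ ⊗[ℝ] V} (hz : z ∈ E) (hz' : conjV V z ∈ E) :
    ∃ a b : V, a ∈ realDelta E ∧ b ∈ realDelta E ∧
      z = (1:ℂ) ⊗ₜ[ℝ] a + Complex.I • ((1:ℂ) ⊗ₜ[ℝ] b) := by
  set zp := (2⁻¹ : ℂ) • z + (2⁻¹ : ℂ) • conjV V z with hzp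
  set w := (-(Complex.I) * 2⁻¹) • z - (-(Complex.I) * 2⁻¹) • conjV V z with hw
  have hconj2 : ∀ u, conjV V ((u : ℂ) • z) = (starRingEnd ℂ) u • conjV V z :=
    fun u => conjV_smul u z
  have hfixp : conjV V zp = zp := by
    rw [hzp, map_add, conjV_smul, conjV_smul, conjV_conjV]
    simp only [map_inv₀, Complex.conj_ofNat]
    module
  have hfixw : conjV V w = w := by
    rw [hw, map_sub, conjV_smul, conjV_smul, conjV_conjV]
    simp only [map_mul, map_neg, Complex.conj_I, map_inv₀, Complex.conj_ofNat, neg_neg]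
    module
  have hzpE : zp ∈ E := add_mem (E.smul_mem _ hz) (E.smul_mem _ hz')
  have hwE : w ∈ E := sub_mem (E.smul_mem _ hz) (E.smul_mem _ hz')
  obtain ⟨a, hazp⟩ := exists_real hfixp
  obtain ⟨b, hbw⟩ := exists_real hfixw
  refine ⟨a, b, ?_, ?_, ?_⟩
  · rw [mem_realDelta_iff, ← hazp]
    exact ⟨hzpE, by rwa [hfixp]⟩
  · rw [mem_realDelta_iff, ← hbw]
    exact ⟨hwE, by rwa [hfixw]⟩
  · rw [← hazp, ← hbw, hzp, hw]
    rw [smul_sub, smul_smul, smul_smul]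
    have h1 : Complex.I * (-(Complex.I) * 2⁻¹) = (2⁻¹ : ℂ) := by
      rw [← mul_assoc, mul_neg, Complex.I_mul_I]; ring
    rw [h1]
    module

end AuxHelpers


section MoreAux
variable {V : Type*} [AddCommGroup V] [Module ℝ V]

lemma conjV_one_tmul (v : V) : conjV V ((1:ℂ) ⊗ₜ[ℝ] v) = (1:ℂ) ⊗ₜ[ℝ] v := by
  rw [conjV_tmul]; simp

/-- Pullback of a functional on `E` to the conjugate subspace. -/
noncomputable def conjPull (E : Submodule ℂ (ℂ ⊗[ℝ] V)) (μ : E →ₗ[ℂ] ℂ) :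
    conjSub E →ₗ[ℂ] ℂ where
  toFun w := (starRingEnd ℂ) (μ ⟨conjV V w.1, w.2⟩)
  map_add' u v := by
    have h : (⟨conjV V (u + v).1, (u + v).2⟩ : E) = ⟨conjV V u.1, u.2⟩ + ⟨conjV V v.1, v.2⟩ :=
      Subtype.ext (map_add (conjV V) u.1 v.1)
    show (starRingEnd ℂ) (μ ⟨conjV V (u + v).1, (u + v).2⟩)
      = (starRingEnd ℂ) (μ ⟨conjV V u.1, u.2⟩) + (starRingEnd ℂ) (μ ⟨conjV V v.1, v.2⟩)
    rw [h, map_add, map_add]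
  map_smul' c w := by
    have h : (⟨conjV V (c • w).1, (c • w).2⟩ : E) = (starRingEnd ℂ) c • ⟨conjV V w.1, w.2⟩ :=
      Subtype.ext (conjV_smul c w.1)
    show (starRingEnd ℂ) (μ ⟨conjV V (c • w).1, (c • w).2⟩)
      = c • (starRingEnd ℂ) (μ ⟨conjV V w.1, w.2⟩)
    rw [h, map_smul, smul_eq_mul, smul_eq_mul, map_mul, Complex.conj_conj]

lemma conjPull_apply (E : Submodule ℂ (ℂ ⊗[ℝ] V)) (μ : E →ₗ[ℂ] ℂ) (w : conjSub E) :
    conjPull E μ w = (starRingEnd ℂ) (μ ⟨conjV V w.1, w.2⟩) := rfl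

/-- Extend a functional defined on `T`, vanishing on `S ∩ T`, to a functional on the whole
space vanishing on `S`. -/
lemma exists_extension_vanishing {W : Type*} [AddCommGroup W] [Module ℂ W]
    (S T : Submodule ℂ W) (θ : T →ₗ[ℂ] ℂ)
    (h0 : ∀ w : T, (w : W) ∈ S → θ w = 0) :
    ∃ ρ : W →ₗ[ℂ] ℂ, (∀ s ∈ S, ρ s = 0) ∧ ∀ w : T, ρ w = θ w := by
  set g : T →ₗ[ℂ] W ⧸ S := S.mkQ ∘ₗ T.subtype with hg
  have hker : LinearMap.ker g ≤ LinearMap.ker θ := by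
    intro w hw
    have h1 : S.mkQ (w : W) = 0 := hw
    rw [Submodule.mkQ_apply, Submodule.Quotient.mk_eq_zero] at h1
    exact LinearMap.mem_ker.mpr (h0 w h1)
  set θb := (LinearMap.ker g).liftQ θ hker with hθb
  set e := g.quotKerEquivRange with he
  obtain ⟨ρt, hρt⟩ := LinearMap.exists_extend
    (θb ∘ₗ (e.symm : LinearMap.range g →ₗ[ℂ] T ⧸ LinearMap.ker g))
  refine ⟨ρt ∘ₗ S.mkQ, ?_, ?_⟩
  · intro s hs
    have h1 : S.mkQ s = 0 := by
      rw [Submodule.mkQ_apply, Submodule.Quotient.mk_eq_zero]; exact hs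
    rw [LinearMap.comp_apply, h1, map_zero]
  · intro w
    have h2 : e.symm ⟨g w, LinearMap.mem_range_self g w⟩ = (LinearMap.ker g).mkQ w :=
      g.quotKerEquivRange_symm_apply_image w (LinearMap.mem_range_self g w)
    have h3 : (ρt ∘ₗ S.mkQ) (w : W)
        = (ρt ∘ₗ (LinearMap.range g).subtype) ⟨g w, LinearMap.mem_range_self g w⟩ := rfl
    rw [h3, hρt]
    simp only [LinearMap.comp_apply, LinearEquiv.coe_coe]
    rw [h2]
    exact Submodule.liftQ_apply _ θ w

/-- `E + conj(E)` as a complex submodule. -/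
noncomputable def supC (E : Submodule ℂ (ℂ ⊗[ℝ] V)) : Submodule ℂ (ℂ ⊗[ℝ] V) where
  carrier := (E.restrictScalars ℝ ⊔ (E.restrictScalars ℝ).map (conjV V) :
    Submodule ℝ (ℂ ⊗[ℝ] V))
  add_mem' := fun ha hb => add_mem ha hb
  zero_mem' := zero_mem _
  smul_mem' := by
    intro c z hz
    obtain ⟨u, hu, w, hw, rfl⟩ := Submodule.mem_sup.mp hz
    obtain ⟨y, hy, rfl⟩ := hw
    refine Submodule.mem_sup.mpr ⟨c • u, E.smul_mem c hu,
      conjV V ((starRingEnd ℂ) c • y), ⟨(starRingEnd ℂ) c • y, E.smul_mem _ hy, rfl⟩, ?_⟩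
    have h1 : conjV V ((starRingEnd ℂ) c • y) = c • conjV V y := by
      rw [conjV_smul]; simp
    rw [h1, smul_add]

lemma mem_supC {E : Submodule ℂ (ℂ ⊗[ℝ] V)} {z : ℂ ⊗[ℝ] V} :
    z ∈ supC E ↔ z ∈ (E.restrictScalars ℝ ⊔ (E.restrictScalars ℝ).map (conjV V) :
      Submodule ℝ (ℂ ⊗[ℝ] V)) := Iff.rfl

end MoreAux

/-- `L(E,ε)` has real index zero, `L ∩ conj(L) = 0`, if and only if
`E + conj(E) = V ⊗ ℂ` and the real 2-form `ω_Δ = Im ε|_Δ` is nondegenerate on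
the real subspace `Δ` with `Δ ⊗ ℂ = E ∩ conj(E)`. -/
theorem LEepsC_real_index_zero_iff
    (V : Type*) [AddCommGroup V] [Module ℝ V] [FiniteDimensional ℝ V]
    (E : Submodule ℂ (ℂ ⊗[ℝ] V)) (ε : E →ₗ[ℂ] E →ₗ[ℂ] ℂ)
    (hskew : ∀ x y : E, ε x y = - ε y x) :
    (∀ p ∈ LEepsC E ε, (conjV V p.1, conjF p.2) ∈ LEepsC E ε → p = 0) ↔
      ((E.restrictScalars ℝ ⊔ (E.restrictScalars ℝ).map (conjV V) = ⊤) ∧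
        (∀ x : V, x ∈ realDelta E →
          ∀ hx : TensorProduct.mk ℝ ℂ V 1 x ∈ E,
          (∀ y : V, y ∈ realDelta E →
            ∀ hy : TensorProduct.mk ℝ ℂ V 1 y ∈ E,
            (ε ⟨TensorProduct.mk ℝ ℂ V 1 x, hx⟩ ⟨TensorProduct.mk ℝ ℂ V 1 y, hy⟩).im = 0) →
          x = 0)) := by
  constructor
  · -- real index zero → (sup = ⊤) ∧ nondegeneracy
    intro Hzero
    constructor
    · -- E + conj E = ⊤
      rw [Submodule.eq_top_iff']
      intro z
      by_contra hz
      have hzC : z ∉ supC E := hz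
      obtain ⟨g, hg⟩ : ∃ g : Module.Dual ℂ ((ℂ ⊗[ℝ] V) ⧸ supC E), g ((supC E).mkQ z) ≠ 0 := by
        by_contra h
        push_neg at h
        have hne : (supC E).mkQ z ≠ 0 := by
          rw [Submodule.mkQ_apply, ne_eq, Submodule.Quotient.mk_eq_zero]
          exact hzC
        exact hne ((Module.forall_dual_apply_eq_zero_iff ℂ _).mp h)
      set η : (ℂ ⊗[ℝ] V) →ₗ[ℂ] ℂ := g ∘ₗ (supC E).mkQ with hηdef
      set ξ : V →ₗ[ℝ] ℂ := (η.restrictScalars ℝ) ∘ₗ (TensorProduct.mk ℝ ℂ V 1) with hξdef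
      have hlift : LinearMap.liftBaseChange ℂ ξ = η := lift_restrict_eq η
      have hηsup : ∀ u ∈ supC E, η u = 0 := by
        intro u hu
        have h1 : (supC E).mkQ u = 0 := by
          rw [Submodule.mkQ_apply, Submodule.Quotient.mk_eq_zero]; exact hu
        rw [hηdef, LinearMap.comp_apply, h1, map_zero]
      have hmemE : ∀ u ∈ E, u ∈ supC E := fun u hu => Submodule.mem_sup_left hu
      have hmemconj : ∀ u ∈ E, conjV V u ∈ supC E := fun u hu =>
        Submodule.mem_sup_right ⟨u, hu, rfl⟩
      have hp1 : ((0 : ℂ ⊗[ℝ] V), ξ) ∈ LEepsC E ε := by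
        refine ⟨E.zero_mem, fun y => ?_⟩
        show LinearMap.liftBaseChange ℂ ξ y.1 = ε ⟨0, E.zero_mem⟩ y
        have h1 : (⟨(0 : ℂ ⊗[ℝ] V), E.zero_mem⟩ : E) = 0 := rfl
        rw [hlift, h1, map_zero, LinearMap.zero_apply]
        exact hηsup y.1 (hmemE y.1 y.2)
      have hc0 : conjV V (0 : ℂ ⊗[ℝ] V) ∈ E := by rw [map_zero]; exact E.zero_mem
      have hp2 : ((conjV V (0 : ℂ ⊗[ℝ] V)), conjF ξ) ∈ LEepsC E ε := by
        refine ⟨hc0, fun y => ?_⟩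
        show LinearMap.liftBaseChange ℂ (conjF ξ) y.1 = ε ⟨conjV V 0, hc0⟩ y
        have h1 : (⟨conjV V (0 : ℂ ⊗[ℝ] V), hc0⟩ : E) = 0 := Subtype.ext (map_zero _)
        rw [liftBaseChange_conjF, hlift, h1, map_zero, LinearMap.zero_apply,
          hηsup (conjV V y.1) (hmemconj y.1 y.2), map_zero]
      have h0 := Hzero ((0 : ℂ ⊗[ℝ] V), ξ) hp1 hp2
      have hξ0 : ξ = 0 := congrArg Prod.snd h0
      rw [hξ0] at hlift
      have : η z = 0 := by
        rw [← hlift]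
        simp
      exact hg (by rw [← this]; rfl)
    · -- nondegeneracy
      intro a ha hxE H
      set x0 : ℂ ⊗[ℝ] V := (1:ℂ) ⊗ₜ[ℝ] a with hx0def
      have hx0E : x0 ∈ E := hxE
      have hfix : conjV V x0 = x0 := conjV_one_tmul a
      have hcx0 : conjV V x0 ∈ E := by rw [hfix]; exact hx0E
      set μ : E →ₗ[ℂ] ℂ := ε ⟨x0, hx0E⟩ with hμdef
      obtain ⟨η₁, hη₁⟩ := LinearMap.exists_extend μ
      have hη₁' : ∀ y : E, η₁ y.1 = μ y := fun y => LinearMap.congr_fun hη₁ y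
      set θ : conjSub E →ₗ[ℂ] ℂ := conjPull E μ - η₁ ∘ₗ (conjSub E).subtype with hθdef
      have hθ0 : ∀ w : conjSub E, (w : ℂ ⊗[ℝ] V) ∈ E → θ w = 0 := by
        intro w hwE
        obtain ⟨a', b', ha', hb', hw⟩ := mem_inter_decomp hwE w.2
        have ha'E : (1:ℂ) ⊗ₜ[ℝ] a' ∈ E := (mem_realDelta_iff.mp ha').1
        have hb'E : (1:ℂ) ⊗ₜ[ℝ] b' ∈ E := (mem_realDelta_iff.mp hb').1
        set A : E := ⟨(1:ℂ) ⊗ₜ[ℝ] a', ha'E⟩ with hAdef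
        set B : E := ⟨(1:ℂ) ⊗ₜ[ℝ] b', hb'E⟩ with hBdef
        have hWE : (⟨(w : ℂ ⊗[ℝ] V), hwE⟩ : E) = A + Complex.I • B := Subtype.ext hw
        have hWc : (⟨conjV V (w : ℂ ⊗[ℝ] V), w.2⟩ : E) = A - Complex.I • B := by
          apply Subtype.ext
          show conjV V (w : ℂ ⊗[ℝ] V) = ((A : ℂ ⊗[ℝ] V) - Complex.I • (B : ℂ ⊗[ℝ] V))
          rw [hw, map_add, conjV_smul, conjV_one_tmul, conjV_one_tmul]
          simp [Complex.conj_I, neg_smul, sub_eq_add_neg]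
          rfl
        have hα : (μ A).im = 0 := H a' ha' ha'E
        have hβ : (μ B).im = 0 := H b' hb' hb'E
        have hαc : (starRingEnd ℂ) (μ A) = μ A := Complex.conj_eq_iff_im.mpr hα
        have hβc : (starRingEnd ℂ) (μ B) = μ B := Complex.conj_eq_iff_im.mpr hβ
        have hstep : θ w = conjPull E μ w - η₁ w.1 := rfl
        rw [hstep, conjPull_apply, hWc, hη₁' ⟨(w : ℂ ⊗[ℝ] V), hwE⟩, hWE]
        simp only [map_sub, map_add, map_smul, smul_eq_mul, map_mul, Complex.conj_I, hαc, hβc]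
        ring
      obtain ⟨ρ, hρS, hρT⟩ := exists_extension_vanishing E (conjSub E) θ hθ0
      set η : (ℂ ⊗[ℝ] V) →ₗ[ℂ] ℂ := η₁ + ρ with hηdef
      set ξ : V →ₗ[ℝ] ℂ := (η.restrictScalars ℝ) ∘ₗ (TensorProduct.mk ℝ ℂ V 1) with hξdef
      have hlift : LinearMap.liftBaseChange ℂ ξ = η := lift_restrict_eq η
      have hp1 : (x0, ξ) ∈ LEepsC E ε := by
        refine ⟨hx0E, fun y => ?_⟩
        show LinearMap.liftBaseChange ℂ ξ y.1 = ε ⟨x0, hx0E⟩ y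
        rw [hlift, hηdef, LinearMap.add_apply, hρS y.1 y.2, add_zero, hη₁' y, hμdef]
      have hp2 : ((conjV V x0), conjF ξ) ∈ LEepsC E ε := by
        refine ⟨hcx0, fun y => ?_⟩
        show LinearMap.liftBaseChange ℂ (conjF ξ) y.1 = ε ⟨conjV V x0, hcx0⟩ y
        have h1 : (⟨conjV V x0, hcx0⟩ : E) = ⟨x0, hx0E⟩ := Subtype.ext hfix
        rw [liftBaseChange_conjF, hlift, h1]
        have hyc : conjV V y.1 ∈ conjSub E := by
          rw [mem_conjSub, conjV_conjV]; exact y.2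
        have h2 : η (conjV V y.1) = (starRingEnd ℂ) (μ y) := by
          have h3 := hρT ⟨conjV V y.1, hyc⟩
          have h4 : θ ⟨conjV V y.1, hyc⟩
              = conjPull E μ ⟨conjV V y.1, hyc⟩ - η₁ (conjV V y.1) := rfl
          have h5 : (⟨conjV V (conjV V y.1), hyc⟩ : E) = y := Subtype.ext (conjV_conjV y.1)
          rw [hηdef, LinearMap.add_apply, h3, h4, conjPull_apply]
          have h6 : (⟨conjV V ((⟨conjV V y.1, hyc⟩ : conjSub E) : ℂ ⊗[ℝ] V),
              (⟨conjV V y.1, hyc⟩ : conjSub E).2⟩ : E) = y := Subtype.ext (conjV_conjV y.1)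
          rw [h6]
          ring
        rw [h2, Complex.conj_conj, hμdef]
      have h0 := Hzero (x0, ξ) hp1 hp2
      have hx00 : x0 = 0 := congrArg Prod.fst h0
      exact one_tmul_eq_zero hx00
  · -- converse
    rintro ⟨hsup, hnd⟩ p hp hpc
    obtain ⟨hx, h1⟩ := hp
    obtain ⟨hcx, h2⟩ := hpc
    set Ξ := LinearMap.liftBaseChange ℂ p.2 with hΞdef
    obtain ⟨a, b, ha, hb, hxab⟩ := mem_inter_decomp hx hcx
    have haE : (1:ℂ) ⊗ₜ[ℝ] a ∈ E := (mem_realDelta_iff.mp ha).1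
    have hbE : (1:ℂ) ⊗ₜ[ℝ] b ∈ E := (mem_realDelta_iff.mp hb).1
    set A : E := ⟨(1:ℂ) ⊗ₜ[ℝ] a, haE⟩ with hAdef
    set B : E := ⟨(1:ℂ) ⊗ₜ[ℝ] b, hbE⟩ with hBdef
    have hX : (⟨p.1, hx⟩ : E) = A + Complex.I • B := Subtype.ext hxab
    have hXc : (⟨conjV V p.1, hcx⟩ : E) = A - Complex.I • B := by
      apply Subtype.ext
      show conjV V p.1 = ((A : ℂ ⊗[ℝ] V) - Complex.I • (B : ℂ ⊗[ℝ] V))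
      rw [hxab, map_add, conjV_smul, conjV_one_tmul, conjV_one_tmul]
      simp [Complex.conj_I, neg_smul, sub_eq_add_neg]
      rfl
    have key : ∀ (y : V), y ∈ realDelta E → ∀ hyE : (1:ℂ) ⊗ₜ[ℝ] y ∈ E,
        (ε A ⟨(1:ℂ) ⊗ₜ[ℝ] y, hyE⟩).im = 0 ∧ (ε B ⟨(1:ℂ) ⊗ₜ[ℝ] y, hyE⟩).im = 0 := by
      intro y hy hyE
      set Y : E := ⟨(1:ℂ) ⊗ₜ[ℝ] y, hyE⟩ with hYdef
      have e1 : Ξ ((1:ℂ) ⊗ₜ[ℝ] y) = ε ⟨p.1, hx⟩ Y := h1 Y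
      have e2 : LinearMap.liftBaseChange ℂ (conjF p.2) ((1:ℂ) ⊗ₜ[ℝ] y)
          = ε ⟨conjV V p.1, hcx⟩ Y := h2 Y
      rw [liftBaseChange_conjF, conjV_one_tmul, ← hΞdef, e1, hX, hXc] at e2
      simp only [map_add, map_sub, map_smul, LinearMap.add_apply, LinearMap.sub_apply,
        LinearMap.smul_apply, smul_eq_mul] at e2
      set α := ε A Y
      set β := ε B Y
      rw [Complex.ext_iff] at e2
      obtain ⟨er, ei⟩ := e2
      simp only [Complex.conj_re, Complex.conj_im, Complex.add_re, Complex.add_im,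
        Complex.sub_re, Complex.sub_im, Complex.mul_re, Complex.mul_im,
        Complex.I_re, Complex.I_im] at er ei
      constructor
      · linarith
      · linarith
    have ha0 : a = 0 := hnd a ha haE (fun y hy hyE => (key y hy hyE).1)
    have hb0 : b = 0 := hnd b hb hbE (fun y hy hyE => (key y hy hyE).2)
    have hp10 : p.1 = 0 := by
      rw [hxab, ha0, hb0]
      simp [TensorProduct.tmul_zero]
    have hX0 : (⟨p.1, hx⟩ : E) = 0 := Subtype.ext hp10
    have hXc0 : (⟨conjV V p.1, hcx⟩ : E) = 0 :=
      Subtype.ext ((congrArg (conjV V) hp10).trans (map_zero _))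
    have hΞE : ∀ u (hu : u ∈ E), Ξ u = 0 := by
      intro u hu
      have := h1 ⟨u, hu⟩
      rw [hX0, map_zero, LinearMap.zero_apply] at this
      exact this
    have hΞcE : ∀ u (hu : u ∈ E), Ξ (conjV V u) = 0 := by
      intro u hu
      have := h2 ⟨u, hu⟩
      rw [hXc0, map_zero, LinearMap.zero_apply, liftBaseChange_conjF, ← hΞdef] at this
      exact star_eq_zero.mp this
    have hΞ0 : ∀ z, Ξ z = 0 := by
      intro z
      have hz : z ∈ (E.restrictScalars ℝ ⊔ (E.restrictScalars ℝ).map (conjV V)) :=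
        hsup.symm ▸ Submodule.mem_top
      obtain ⟨u, hu, w, hw, rfl⟩ := Submodule.mem_sup.mp hz
      obtain ⟨y, hy, rfl⟩ := hw
      rw [map_add, hΞE u hu, hΞcE y hy, add_zero]
    have hp20 : p.2 = 0 := by
      ext v
      have := hΞ0 ((1:ℂ) ⊗ₜ[ℝ] v)
      rw [hΞdef, LinearMap.liftBaseChange_one_tmul] at this
      simpa using this
    rw [Prod.ext_iff]
    exact ⟨hp10, hp20⟩
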